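/- arXiv:2211.09415 — 4 statements merged into one kernel-verified Lean document; each statement's English description precedes it below -/
import Mathlib

section
/- Let G = (V,E) be a finite connected simple graph, T a spanning tree of G rooted at s, and x ∈ V with x ≠ s such that the induced subgraph G \ {x} is connected (x is not a cut vertex). Then every connected component C of the induced subgraph G[V_x], where V_x = V(T_x) \ {x}, has an edge (u_C, v_C) of G with v_C ∈ C and u_C ∈ V \ V(T_x). -/
/-- A rooted spanning tree of the graph `G`, given by a root and a parent function:
the root is a fixed point of `parent`, every vertex reaches the root by iterating
`parent`, and every (parent, child) pair is an edge of `G`. -/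
structure RSTree {V : Type*} (G : SimpleGraph V) where
  root : V
  parent : V → V
  parent_root : parent root = root
  reaches : ∀ v : V, ∃ n : ℕ, parent^[n] v = root
  adj : ∀ v : V, v ≠ root → G.Adj (parent v) v

namespace RSTree

variable {V : Type*} {G : SimpleGraph V}

/-- `u` is an ancestor of `v` in `T`, i.e. `u` lies on the tree path `π(root, v)`;
includes `u = v`. -/
def Anc (T : RSTree G) (u v : V) : Prop := ∃ n : ℕ, T.parent^[n] v = u

/-- The vertex set `V(T_x)` of the subtree of `T` rooted at `x`. -/
def sub (T : RSTree G) (x : V) : Set V := {v | T.Anc x v}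

/-- `c` is a child of `v` in `T`. -/
def IsChild (T : RSTree G) (c v : V) : Prop := T.parent c = v ∧ c ≠ v

/-- `V_x = V(T_x) \ {x}`. -/
def Vx (T : RSTree G) (x : V) : Set V := {v | T.Anc x v ∧ v ≠ x}

end RSTree

/-- `v` and `w` are connected by a walk of `G` all of whose vertices lie in `S`
(i.e. they lie in the same connected component of the induced subgraph `G[S]`). -/
def ReachableWithin {V : Type*} (G : SimpleGraph V) (S : Set V) (v w : V) : Prop :=
  ∃ p : G.Walk v w, ∀ u ∈ p.support, u ∈ S

/-- `C` is (the vertex set of) a connected component of the induced subgraph `G[S]`. -/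
def IsCompOf {V : Type*} (G : SimpleGraph V) (S : Set V) (C : Set V) : Prop :=
  ∃ v ∈ S, C = {w | ReachableWithin G S v w}

/-! Since `x` is not a cut vertex, any vertex of `V_x` is joined to the root by a walk avoiding
`x`. The root lies outside `V(T_x)`, so this walk leaves `V_x`, and the edge along which it
first does so starts in the component of `V_x` it began in and ends outside `V_x ∪ {x}`. -/

namespace RSTree

variable {V : Type*} {G : SimpleGraph V}

theorem root_notMem_sub (T : RSTree G) {x : V} (hxs : x ≠ T.root) : T.root ∉ T.sub x := by
  rintro ⟨n, hn⟩
  rw [Function.iterate_fixed T.parent_root] at hn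
  exact hxs hn.symm

end RSTree

namespace ReachableWithin

variable {V : Type*} {G : SimpleGraph V} {S : Set V}

theorem refl {v : V} (hv : v ∈ S) : ReachableWithin G S v v :=
  ⟨.nil, by simpa using hv⟩

theorem cons {u v w : V} (h : G.Adj u v) (hu : u ∈ S) (hvw : ReachableWithin G S v w) :
    ReachableWithin G S u w := by
  obtain ⟨p, hp⟩ := hvw
  refine ⟨.cons h p, fun a ha => ?_⟩
  rcases List.mem_cons.mp (SimpleGraph.Walk.support_cons h p ▸ ha) with rfl | ha
  exacts [hu, hp a ha]

end ReachableWithin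

namespace SimpleGraph.Walk

variable {V : Type*} {G : SimpleGraph V} {S : Set V}

theorem reachableWithin_of_induce {a b : S} (p : (G.induce S).Walk a b) :
    ReachableWithin G S a b := by
  refine ⟨p.map (Embedding.induce S).toHom, fun u hu => ?_⟩
  obtain ⟨u, -, rfl⟩ := List.mem_map.mp ((support_map _ p) ▸ hu)
  exact u.2

theorem exists_adj_reachableWithin_notMem {v w : V} (p : G.Walk v w) (hv : v ∈ S)
    (hw : w ∉ S) :
    ∃ a b, G.Adj a b ∧ ReachableWithin G S v a ∧ b ∉ S ∧ b ∈ p.support := by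
  induction p with
  | nil => exact absurd hv hw
  | @cons v c w h p ih =>
    by_cases hc : c ∈ S
    · obtain ⟨a, b, hab, hca, hb, hbp⟩ := ih hc hw
      exact ⟨a, b, hab, .cons h hv hca, hb, List.mem_cons_of_mem _ hbp⟩
    · exact ⟨v, c, h, .refl hv, hc, List.mem_cons_of_mem _ p.start_mem_support⟩

end SimpleGraph.Walk

theorem stmt7_general {V : Type*} (G : SimpleGraph V)
    (T : RSTree G) (x : V) (hxs : x ≠ T.root)
    (hx : (G.induce (({x} : Set V)ᶜ)).Connected)
    (C : Set V) (hC : IsCompOf G (T.Vx x) C) :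
    ∃ u v : V, G.Adj u v ∧ v ∈ C ∧ u ∉ T.sub x := by
  obtain ⟨v₀, hv₀, rfl⟩ := hC
  obtain ⟨p⟩ := hx.preconnected ⟨v₀, hv₀.2⟩ ⟨T.root, hxs.symm⟩
  obtain ⟨q, hq⟩ := p.reachableWithin_of_induce
  obtain ⟨a, b, hab, hv₀a, hb, hbq⟩ :=
    q.exists_adj_reachableWithin_notMem hv₀ fun h => T.root_notMem_sub hxs h.1
  have hbx : b ≠ x := hq b hbq
  exact ⟨b, a, hab.symm, hv₀a, fun hbT => hb ⟨hbT, hbx⟩⟩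

/-- Let `G` be a finite connected simple graph, `T` a spanning tree of
`G` rooted at `s`, and `x ≠ s` a vertex such that `G \ {x}` is connected (`x` is not a
cut vertex). Then every connected component `C` of the induced subgraph `G[V_x]`,
where `V_x = V(T_x) \ {x}`, has an edge `(u_C, v_C)` of `G` with `v_C ∈ C` and
`u_C ∈ V \ V(T_x)`. -/
theorem stmt7 {V : Type*} [Fintype V] (G : SimpleGraph V) (hG : G.Connected)
    (T : RSTree G) (x : V) (hxs : x ≠ T.root)
    (hx : (G.induce (({x} : Set V)ᶜ)).Connected)
    (C : Set V) (hC : IsCompOf G (T.Vx x) C) :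
    ∃ u v : V, G.Adj u v ∧ v ∈ C ∧ u ∉ T.sub x :=
  stmt7_general G T x hxs hx C hC
end

section
/- Let x, y be an independent pair, both ≠ s, with G \ {x} and G \ {y} connected, with fixed component data and paths for both. If a component C ∈ C_x is not fully-y-sensitive (i.e., C ∉ FS(x,y)), then some vertex of C is connected to s by a path in G \ {x,y} that avoids all vertices of all components in FS(x,y) ∪ FS(y,x). -/
/-- The connected component of `v` in the induced subgraph `G[S]` (as a vertex set). -/
def CompOfVert {V : Type*} (G : SimpleGraph V) (S : Set V) (v : V) : Set V :=
  {w | ReachableWithin G S v w}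

/-- The vertex set of the path `π_x(s,C) = π(s, u_C) ∘ (u_C, v_C)` associated to a
component `C` (given the choice functions `uc, vc` of the edge `(u_C, v_C)`): it
consists of all ancestors of `u_C` together with `v_C`. -/
def CompPath {V : Type*} {G : SimpleGraph V} (T : RSTree G)
    (uc vc : Set V → V) (C : Set V) : Set V :=
  {w | T.Anc w (uc C)} ∪ {vc C}

/-- `C ∈ 𝒞_x` is pseudo-`y`-sensitive: the path `π_x(s,C)` contains a tree edge
`(y, y')` from `y` to a child `y'` of `y` such that `x` does not lie on
`π_y(s, C_{y,y'})`. Here `ucx, vcx` are the edge choices for components of `G[V_x]`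
and `ucy, vcy` those for components of `G[V_y]`. -/
def PseudoSens {V : Type*} {G : SimpleGraph V} (T : RSTree G)
    (ucx vcx ucy vcy : Set V → V) (x y : V) (C : Set V) : Prop :=
  ∃ y', T.IsChild y' y ∧ T.Anc y' (ucx C) ∧
    x ∉ CompPath T ucy vcy (CompOfVert G (T.Vx y) y')

/-- `C ∈ 𝒞_x` is fully-`y`-sensitive: `y` lies on `π_x(s,C)` (i.e. `C` is
`y`-sensitive) and `C` is not pseudo-`y`-sensitive. -/
def FullySens {V : Type*} {G : SimpleGraph V} (T : RSTree G)
    (ucx vcx ucy vcy : Set V → V) (x y : V) (C : Set V) : Prop :=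
  y ∈ CompPath T ucx vcx C ∧ ¬ PseudoSens T ucx vcx ucy vcy x y C

section ReachableWithin

variable {V : Type*} {G : SimpleGraph V} {S S' : Set V} {u v w : V}

lemma ReachableWithin.refl_s9 (hv : v ∈ S) : ReachableWithin G S v v :=
  ⟨.nil, by simpa⟩

lemma ReachableWithin.symm (h : ReachableWithin G S v w) : ReachableWithin G S w v := by
  obtain ⟨p, hp⟩ := h
  exact ⟨p.reverse, by simpa using hp⟩

lemma ReachableWithin.trans (h₁ : ReachableWithin G S u v) (h₂ : ReachableWithin G S v w) :
    ReachableWithin G S u w := by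
  obtain ⟨p, hp⟩ := h₁
  obtain ⟨q, hq⟩ := h₂
  refine ⟨p.append q, fun z hz => ?_⟩
  rcases SimpleGraph.Walk.mem_support_append_iff p q |>.mp hz with hz | hz
  exacts [hp z hz, hq z hz]

lemma ReachableWithin.mono (h : ReachableWithin G S v w) (hS : ∀ z ∈ S, z ∈ S') :
    ReachableWithin G S' v w := by
  obtain ⟨p, hp⟩ := h
  exact ⟨p, fun z hz => hS z (hp z hz)⟩

lemma ReachableWithin.mem_right (h : ReachableWithin G S v w) : w ∈ S := by
  obtain ⟨p, hp⟩ := h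
  exact hp w p.end_mem_support

lemma ReachableWithin.concat (h : ReachableWithin G S u v) (hadj : G.Adj v w) (hw : w ∈ S) :
    ReachableWithin G S u w :=
  h.trans ⟨.cons hadj .nil, by simpa using ⟨h.mem_right, hw⟩⟩

lemma ReachableWithin.compOfVert (h : ReachableWithin G S v w) :
    ReachableWithin G (CompOfVert G S v) v w := by
  classical
  obtain ⟨p, hp⟩ := h
  exact ⟨p, fun z hz =>
    ⟨p.takeUntil z hz, fun u hu => hp u (p.support_takeUntil_subset_support hz hu)⟩⟩

lemma IsCompOf.subset {C : Set V} (hC : IsCompOf G S C) : C ⊆ S := by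
  obtain ⟨v₀, -, rfl⟩ := hC
  exact fun _ hw => ReachableWithin.mem_right hw

lemma IsCompOf.eq_of_mem {C₁ C₂ : Set V} (h₁ : IsCompOf G S C₁) (h₂ : IsCompOf G S C₂)
    (hw₁ : w ∈ C₁) (hw₂ : w ∈ C₂) : C₁ = C₂ := by
  obtain ⟨v₁, -, rfl⟩ := h₁
  obtain ⟨v₂, -, rfl⟩ := h₂
  have r₁ : ReachableWithin G S v₁ w := hw₁
  have r₂ : ReachableWithin G S v₂ w := hw₂
  ext z
  exact ⟨fun hz => r₂.trans (r₁.symm.trans hz), fun hz => r₁.trans (r₂.symm.trans hz)⟩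

lemma IsCompOf.reachableWithin {D : Set V} (hD : IsCompOf G S D) (hv : v ∈ D) (hw : w ∈ D) :
    ReachableWithin G D v w := by
  obtain ⟨v₀, -, rfl⟩ := hD
  have hv : ReachableWithin G S v₀ v := hv
  exact (hv.symm.trans hw).compOfVert.mono fun z hz => hv.trans hz

end ReachableWithin

namespace RSTree

variable {V : Type*} {G : SimpleGraph V} (T : RSTree G) {a b c : V}

lemma anc_refl (a : V) : T.Anc a a := ⟨0, rfl⟩

lemma anc_parent (a : V) : T.Anc (T.parent a) a := ⟨1, rfl⟩

lemma anc_root (a : V) : T.Anc T.root a := T.reaches a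

lemma mem_sub_self (a : V) : a ∈ T.sub a := T.anc_refl a

variable {T}

lemma anc_trans (h₁ : T.Anc a b) (h₂ : T.Anc b c) : T.Anc a c := by
  obtain ⟨m, hm⟩ := h₁
  obtain ⟨n, hn⟩ := h₂
  exact ⟨m + n, by rw [Function.iterate_add_apply, hn, hm]⟩

lemma anc_total (h₁ : T.Anc a c) (h₂ : T.Anc b c) : T.Anc a b ∨ T.Anc b a := by
  obtain ⟨m, hm⟩ := h₁
  obtain ⟨n, hn⟩ := h₂
  rcases le_total m n with h | h
  · refine .inr ⟨n - m, ?_⟩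
    rw [← hm, ← Function.iterate_add_apply, Nat.sub_add_cancel h, hn]
  · refine .inl ⟨m - n, ?_⟩
    rw [← hn, ← Function.iterate_add_apply, Nat.sub_add_cancel h, hm]

lemma eq_root_of_isPeriodicPt {k : ℕ} (hk : 0 < k) (h : Function.IsPeriodicPt T.parent k a) :
    a = T.root := by
  obtain ⟨N, hN⟩ := T.reaches a
  calc a = T.parent^[k * N] a := (h.mul_const N).eq.symm
    _ = T.parent^[k * N - N] (T.parent^[N] a) := by
      rw [← Function.iterate_add_apply, Nat.sub_add_cancel (Nat.le_mul_of_pos_left N hk)]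
    _ = T.root := by rw [hN, Function.iterate_fixed T.parent_root]

lemma anc_antisymm (h₁ : T.Anc a b) (h₂ : T.Anc b a) : a = b := by
  obtain ⟨m, hm⟩ := h₁
  obtain ⟨n, hn⟩ := h₂
  rcases Nat.eq_zero_or_pos m with rfl | hm₀
  · exact hm.symm
  · have ha : a = T.root := eq_root_of_isPeriodicPt (Nat.add_pos_left hm₀ n)
      (by rw [Function.IsPeriodicPt, Function.IsFixedPt, Function.iterate_add_apply, hn, hm])
    rw [← hn, ha, Function.iterate_fixed T.parent_root]

lemma disjoint_sub {x y : V} (h₁ : ¬ T.Anc x y) (h₂ : ¬ T.Anc y x) :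
    Disjoint (T.sub x) (T.sub y) :=
  Set.disjoint_left.mpr fun _ hx hy => (anc_total hx hy).elim h₁ h₂

lemma IsChild.mem_Vx_of_anc (hc : T.IsChild c a) (hb : T.Anc c b) : b ∈ T.Vx a := by
  have hac : T.Anc a c := hc.1 ▸ T.anc_parent c
  refine ⟨anc_trans hac hb, ?_⟩
  rintro rfl
  exact hc.2 (anc_antisymm hb hac)

lemma reachableWithin_of_anc (h : T.Anc a b) :
    ReachableWithin G {w | T.Anc a w ∧ T.Anc w b} a b := by
  obtain ⟨n, rfl⟩ := h
  induction n generalizing b with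
  | zero => exact .refl ⟨T.anc_refl b, T.anc_refl b⟩
  | succ n ih =>
    rw [Function.iterate_succ_apply]
    by_cases hb : b = T.root
    · rw [hb, T.parent_root]
      exact ih
    · have hb_mem : T.Anc (T.parent^[n] (T.parent b)) b ∧ T.Anc b b :=
        ⟨⟨n + 1, Function.iterate_succ_apply _ _ _⟩, T.anc_refl b⟩
      refine ReachableWithin.concat ?_ (T.adj b hb) hb_mem
      exact (ih (b := T.parent b)).mono fun w hw => ⟨hw.1, anc_trans hw.2 (T.anc_parent b)⟩

end RSTree

section Avoidance

variable {V : Type*} {G : SimpleGraph V} {T : RSTree G} {ucx vcx ucy vcy : Set V → V}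
  {x y w : V}

def AvoidsFullySens (T : RSTree G) (ucx vcx ucy vcy : Set V → V) (x y w : V) : Prop :=
  w ≠ x ∧ w ≠ y ∧
    (∀ C', IsCompOf G (T.Vx x) C' → FullySens T ucx vcx ucy vcy x y C' → w ∉ C') ∧
    (∀ C', IsCompOf G (T.Vx y) C' → FullySens T ucy vcy ucx vcx y x C' → w ∉ C')

lemma avoidsFullySens_comm :
    AvoidsFullySens T ucx vcx ucy vcy x y w ↔ AvoidsFullySens T ucy vcy ucx vcx y x w := by
  unfold AvoidsFullySens
  tauto

lemma avoidsFullySens_of_notMem_sub (hx : w ∉ T.sub x) (hy : w ∉ T.sub y) :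
    AvoidsFullySens T ucx vcx ucy vcy x y w := by
  refine ⟨?_, ?_, fun _ hC' _ hw => hx (hC'.subset hw).1,
    fun _ hC' _ hw => hy (hC'.subset hw).1⟩
  · rintro rfl
    exact hx (T.mem_sub_self w)
  · rintro rfl
    exact hy (T.mem_sub_self w)

lemma avoidsFullySens_of_mem_comp (hdisj : Disjoint (T.sub x) (T.sub y)) {D : Set V}
    (hD : IsCompOf G (T.Vx x) D) (hDns : ¬ FullySens T ucx vcx ucy vcy x y D) (hw : w ∈ D) :
    AvoidsFullySens T ucx vcx ucy vcy x y w := by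
  have hwx : w ∈ T.Vx x := hD.subset hw
  refine ⟨hwx.2, hdisj.ne_of_mem hwx.1 (T.mem_sub_self y), ?_, ?_⟩
  · intro C' hC' hFS hw'
    exact hDns (hD.eq_of_mem hC' hw hw' ▸ hFS)
  · intro C' hC' _ hw'
    exact hdisj.ne_of_mem hwx.1 (hC'.subset hw').1 rfl

lemma reachableWithin_root_of_notMem_sub {u : V} (hx : u ∉ T.sub x) (hy : u ∉ T.sub y) :
    ReachableWithin G {w | AvoidsFullySens T ucx vcx ucy vcy x y w} T.root u :=
  (T.reachableWithin_of_anc (T.anc_root u)).mono fun _ hw =>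
    avoidsFullySens_of_notMem_sub (fun hxw => hx (RSTree.anc_trans hxw hw.2))
      (fun hyw => hy (RSTree.anc_trans hyw hw.2))

lemma reachableWithin_root_of_pseudoSens (hdisj : Disjoint (T.sub x) (T.sub y))
    (huy : ∀ D, IsCompOf G (T.Vx y) D →
      G.Adj (ucy D) (vcy D) ∧ vcy D ∈ D ∧ ucy D ∉ T.sub y)
    {C : Set V} (hps : PseudoSens T ucx vcx ucy vcy x y C) :
    ReachableWithin G {w | AvoidsFullySens T ucx vcx ucy vcy x y w} T.root (ucx C) := by
  obtain ⟨y', hy', hanc, hxD⟩ := hps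
  set D := CompOfVert G (T.Vx y) y'
  have hD : IsCompOf G (T.Vx y) D := ⟨y', hy'.mem_Vx_of_anc (T.anc_refl y'), rfl⟩
  obtain ⟨hadjD, hvD, huD⟩ := huy D hD
  have hucD : ucx C ∈ D :=
    (T.reachableWithin_of_anc hanc).mono fun _ hw => hy'.mem_Vx_of_anc hw.1
  have hD_avoids : ∀ w ∈ D, AvoidsFullySens T ucx vcx ucy vcy x y w := fun _ hw =>
    avoidsFullySens_comm.mpr (avoidsFullySens_of_mem_comp hdisj.symm hD (fun h => hxD h.1) hw)
  exact ((reachableWithin_root_of_notMem_sub (fun h => hxD (.inl h)) huD).concat hadjD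
    (hD_avoids _ hvD)).trans ((hD.reachableWithin hvD hucD).mono hD_avoids)

end Avoidance

theorem stmt9_general {V : Type*} (G : SimpleGraph V)
    (T : RSTree G) (x y : V)
    (hind₁ : ¬ T.Anc x y) (hind₂ : ¬ T.Anc y x)
    (ucx vcx : Set V → V)
    (hux : ∀ C, IsCompOf G (T.Vx x) C →
      G.Adj (ucx C) (vcx C) ∧ vcx C ∈ C ∧ ucx C ∉ T.sub x)
    (ucy vcy : Set V → V)
    (huy : ∀ C, IsCompOf G (T.Vx y) C →
      G.Adj (ucy C) (vcy C) ∧ vcy C ∈ C ∧ ucy C ∉ T.sub y)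
    (C : Set V) (hC : IsCompOf G (T.Vx x) C)
    (hCnot : ¬ FullySens T ucx vcx ucy vcy x y C) :
    ∃ v ∈ C, ∃ p : G.Walk T.root v, ∀ w ∈ p.support,
      w ≠ x ∧ w ≠ y ∧
      (∀ C', IsCompOf G (T.Vx x) C' → FullySens T ucx vcx ucy vcy x y C' → w ∉ C') ∧
      (∀ C', IsCompOf G (T.Vx y) C' → FullySens T ucy vcy ucx vcx y x C' → w ∉ C') := by
  obtain ⟨hadj, hvC, huC⟩ := hux C hC
  have hdisj := T.disjoint_sub hind₁ hind₂
  have hreach :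
      ReachableWithin G {w | AvoidsFullySens T ucx vcx ucy vcy x y w} T.root (ucx C) := by
    by_cases hps : PseudoSens T ucx vcx ucy vcy x y C
    · exact reachableWithin_root_of_pseudoSens hdisj huy hps
    · exact reachableWithin_root_of_notMem_sub huC fun hy => hCnot ⟨.inl hy, hps⟩
  exact ⟨vcx C, hvC, hreach.concat hadj (avoidsFullySens_of_mem_comp hdisj hC hCnot hvC)⟩

/-- Let `x, y` be an independent pair, both `≠ s`, with `G \ {x}` and
`G \ {y}` connected, with fixed component edge-choices for both. If a component `C` of
`G[V_x]` is not fully-`y`-sensitive (i.e. `C ∉ FS(x,y)`), then some vertex of `C` is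
connected to `s` by a path in `G \ {x,y}` avoiding all vertices of all components in
`FS(x,y) ∪ FS(y,x)`. -/
theorem stmt9 {V : Type*} [Fintype V] (G : SimpleGraph V) (hG : G.Connected)
    (T : RSTree G) (x y : V)
    (hxs : x ≠ T.root) (hys : y ≠ T.root)
    (hind₁ : ¬ T.Anc x y) (hind₂ : ¬ T.Anc y x)
    (hx : (G.induce (({x} : Set V)ᶜ)).Connected)
    (hy : (G.induce (({y} : Set V)ᶜ)).Connected)
    (ucx vcx : Set V → V)
    (hux : ∀ C, IsCompOf G (T.Vx x) C →
      G.Adj (ucx C) (vcx C) ∧ vcx C ∈ C ∧ ucx C ∉ T.sub x)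
    (ucy vcy : Set V → V)
    (huy : ∀ C, IsCompOf G (T.Vx y) C →
      G.Adj (ucy C) (vcy C) ∧ vcy C ∈ C ∧ ucy C ∉ T.sub y)
    (C : Set V) (hC : IsCompOf G (T.Vx x) C)
    (hCnot : ¬ FullySens T ucx vcx ucy vcy x y C) :
    ∃ v ∈ C, ∃ p : G.Walk T.root v, ∀ w ∈ p.support,
      w ≠ x ∧ w ≠ y ∧
      (∀ C', IsCompOf G (T.Vx x) C' → FullySens T ucx vcx ucy vcy x y C' → w ∉ C') ∧
      (∀ C', IsCompOf G (T.Vx y) C' → FullySens T ucy vcy ucx vcx y x C' → w ∉ C') :=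
  stmt9_general G T x y hind₁ hind₂ ucx vcx hux ucy vcy huy C hC hCnot
end

section
/- Let x ∈ V, x ≠ s, with G \ {x} connected and x not a leaf of T, and let R(x) and r(x) be as defined (R(x) is nonempty since u_{H_x} ∈ R(x)). If y is a vertex lying on π(s, u_{H_x}) strictly below r(x) (i.e., r(x) is a proper ancestor of y), then the source s is connected to the heavy component H_x in G \ {x,y}: there is a path in G avoiding both x and y from s to a vertex of H_x. -/
/-- `hch` is a valid designation of heavy children: for every non-leaf vertex `v`,
`hch v` is a child of `v` whose subtree has the maximum number of vertices among all
children of `v`. -/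
def HchValid {V : Type*} {G : SimpleGraph V} (T : RSTree G) (hch : V → V) : Prop :=
  ∀ v : V, (∃ c, T.IsChild c v) →
    T.IsChild (hch v) v ∧ ∀ c, T.IsChild c v → (T.sub c).ncard ≤ (T.sub (hch v)).ncard

/-- The family `uc, vc` of edge choices is valid: for every `x ≠ s` with `G \ {x}`
connected and every connected component `C` of `G[V_x]`, `(uc x C, vc x C)` is an edge
of `G` with `vc x C ∈ C` and `uc x C ∉ V(T_x)`. -/
def GoodChoice {V : Type*} (G : SimpleGraph V) (T : RSTree G)
    (uc vc : V → Set V → V) : Prop :=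
  ∀ x : V, x ≠ T.root → (G.induce (({x} : Set V)ᶜ)).Connected →
    ∀ C, IsCompOf G (T.Vx x) C →
      G.Adj (uc x C) (vc x C) ∧ vc x C ∈ C ∧ uc x C ∉ T.sub x

/-- `x, y` is a heavy pair: an independent pair, both non-leaves of `T`, both `≠ s`,
with `G \ {x}` and `G \ {y}` connected, such that every fully-`y`-sensitive component
`C ∈ FS(x,y)` has the tree edge `(y, y_h)` on `π_x(s,C)` and every fully-`x`-sensitive
component `C ∈ FS(y,x)` has the tree edge `(x, x_h)` on `π_y(s,C)`. -/
def HeavyPair {V : Type*} {G : SimpleGraph V} (T : RSTree G) (hch : V → V)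
    (uc vc : V → Set V → V) (x y : V) : Prop :=
  x ≠ T.root ∧ y ≠ T.root ∧ ¬ T.Anc x y ∧ ¬ T.Anc y x ∧
  T.IsChild (hch x) x ∧ T.IsChild (hch y) y ∧
  (G.induce (({x} : Set V)ᶜ)).Connected ∧ (G.induce (({y} : Set V)ᶜ)).Connected ∧
  (∀ C, IsCompOf G (T.Vx x) C → FullySens T (uc x) (vc x) (uc y) (vc y) x y C →
    T.Anc (hch y) (uc x C)) ∧
  (∀ C, IsCompOf G (T.Vx y) C → FullySens T (uc y) (vc y) (uc x) (vc x) y x C →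
    T.Anc (hch x) (uc y C))

/-!
Since `r(x)` is the lowest common ancestor of `R(x)` and `y` lies strictly below it, `y` is
not an ancestor of some `a ∈ R(x)`. The tree path from `s` to `a` followed by an edge from `a`
into `H_x` then avoids `y`; it avoids `x` because `a ∉ V(T_x)`, and its last vertex lies in
`V_x` while `y ∉ V(T_x)`, as `y` is an ancestor of `u_{H_x} ∉ V(T_x)`.
-/

namespace RSTree

variable {V : Type*} {G : SimpleGraph V} {T : RSTree G}

lemma anc_refl_s12 (T : RSTree G) (v : V) : T.Anc v v := ⟨0, rfl⟩

lemma anc_trans_s12 {u v w : V} (huv : T.Anc u v) (hvw : T.Anc v w) : T.Anc u w := by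
  obtain ⟨n, rfl⟩ := huv
  obtain ⟨m, rfl⟩ := hvw
  exact ⟨n + m, Function.iterate_add_apply _ _ _ _⟩

lemma anc_parent_s12 (T : RSTree G) (v : V) : T.Anc (T.parent v) v := ⟨1, rfl⟩

lemma eq_root_of_isPeriodicPt_s12 {v : V} {k : ℕ}
    (hv : Function.IsPeriodicPt T.parent (k + 1) v) : v = T.root := by
  obtain ⟨N, hN⟩ := T.reaches v
  calc v = T.parent^[(k + 1) * N] v := (hv.mul_const N).eq.symm
    _ = T.parent^[k * N] (T.parent^[N] v) := by rw [← Function.iterate_add_apply, add_one_mul]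
    _ = T.root := by rw [hN, Function.iterate_fixed T.parent_root]

lemma anc_antisymm_s12 {u v : V} (huv : T.Anc u v) (hvu : T.Anc v u) : u = v := by
  obtain ⟨n, rfl⟩ := huv
  obtain ⟨m, hm⟩ := hvu
  by_cases h : m + n = 0
  · rw [Nat.eq_zero_of_add_eq_zero_left h, Function.iterate_zero_apply]
  obtain ⟨k, hk⟩ := Nat.exists_eq_add_one_of_ne_zero h
  have hv : v = T.root := eq_root_of_isPeriodicPt_s12 (k := k) <| by
    rw [← hk, Function.IsPeriodicPt, Function.IsFixedPt, Function.iterate_add_apply, hm]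
  rw [hv, Function.iterate_fixed T.parent_root]

lemma mem_Vx_of_isChild {c v : V} (hc : T.IsChild c v) : c ∈ T.Vx v :=
  ⟨⟨1, hc.1⟩, hc.2⟩

lemma exists_walk_from_root_support_anc (T : RSTree G) (v : V) :
    ∃ p : G.Walk T.root v, ∀ u ∈ p.support, T.Anc u v := by
  obtain ⟨n, hn⟩ := T.reaches v
  induction n generalizing v with
  | zero =>
    subst hn
    exact ⟨.nil, by simp [anc_refl_s12]⟩
  | succ n ih =>
    by_cases hv : v = T.root
    · subst hv
      exact ⟨.nil, by simp [anc_refl_s12]⟩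
    obtain ⟨p, hp⟩ := ih (T.parent v) hn
    refine ⟨p.concat (T.adj v hv), fun u hu => ?_⟩
    rw [SimpleGraph.Walk.support_concat, List.mem_append, List.mem_singleton] at hu
    rcases hu with hu | rfl
    · exact anc_trans_s12 (hp u hu) (T.anc_parent_s12 v)
    · exact T.anc_refl_s12 u

lemma reachableWithin_root_of_adj {S : Set V} {a b : V} (haS : ∀ u ∈ S, ¬ T.Anc u a)
    (hab : G.Adj a b) (hbS : b ∉ S) : ReachableWithin G Sᶜ T.root b := by
  obtain ⟨p, hp⟩ := T.exists_walk_from_root_support_anc a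
  refine ⟨p.concat hab, fun u hu => ?_⟩
  rw [SimpleGraph.Walk.support_concat, List.mem_append, List.mem_singleton] at hu
  rcases hu with hu | rfl
  · exact fun huS => haS u huS (hp u hu)
  · exact hbS

lemma exists_not_anc_of_lowest_common_anc {R : V → Prop} {r y : V}
    (hr : ∀ w, (∀ a, R a → T.Anc w a) → T.Anc w r) (hry : T.Anc r y) (hyr : y ≠ r) :
    ∃ a, R a ∧ ¬ T.Anc y a := by
  by_contra! h
  exact hyr (anc_antisymm_s12 (hr y h) hry)

end RSTree

lemma mem_of_mem_compOfVert {V : Type*} {G : SimpleGraph V} {S : Set V} {v w : V}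
    (hw : w ∈ CompOfVert G S v) : w ∈ S :=
  let ⟨p, hp⟩ := hw
  hp w p.end_mem_support

theorem stmt12_general {V : Type*} (G : SimpleGraph V)
    (T : RSTree G) (hch : V → V)
    (uc vc : V → Set V → V) (hgood : GoodChoice G T uc vc)
    (x : V) (hxs : x ≠ T.root)
    (hx : (G.induce (({x} : Set V)ᶜ)).Connected)
    (hxh : T.IsChild (hch x) x)
    (r0 : V)
    (hr2 : ∀ w : V,
      (∀ a : V, (a ∉ T.sub x ∧ ∃ b ∈ CompOfVert G (T.Vx x) (hch x), G.Adj a b) →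
        T.Anc w a) → T.Anc w r0)
    (y : V)
    (hy1 : T.Anc y (uc x (CompOfVert G (T.Vx x) (hch x))))
    (hy2 : T.Anc r0 y) (hy3 : y ≠ r0) :
    ∃ b ∈ CompOfVert G (T.Vx x) (hch x),
      ReachableWithin G (({x, y} : Set V)ᶜ) T.root b := by
  set H := CompOfVert G (T.Vx x) (hch x)
  have hH : IsCompOf G (T.Vx x) H := ⟨hch x, RSTree.mem_Vx_of_isChild hxh, rfl⟩
  have huH : uc x H ∉ T.sub x := (hgood x hxs hx H hH).2.2
  have hyx : y ∉ T.sub x := fun hxy => huH (RSTree.anc_trans_s12 hxy hy1)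
  obtain ⟨a, ⟨hax, b, hbH, hab⟩, hya⟩ := RSTree.exists_not_anc_of_lowest_common_anc hr2 hy2 hy3
  have hbx : b ∈ T.Vx x := mem_of_mem_compOfVert hbH
  refine ⟨b, hbH, RSTree.reachableWithin_root_of_adj ?_ hab ?_⟩
  · rintro u (rfl | rfl)
    exacts [hax, hya]
  · rintro (rfl | rfl)
    exacts [hbx.2 rfl, hyx hbx.1]

/-- Let `x ≠ s` with `G \ {x}` connected and `x` not a leaf of `T`,
let `H_x` be the heavy component of `x`, let
`R(x) = {v ∉ V(T_x) : v has a G-neighbor in H_x}` (nonempty since `u_{H_x} ∈ R(x)`),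
and let `r(x)` be the lowest common ancestor of `R(x)`: an ancestor `r₀` of every
vertex of `R(x)` such that every common ancestor of `R(x)` is an ancestor of `r₀`.
If `y` lies on `π(s, u_{H_x})` strictly below `r(x)` (i.e. `r(x)` is a proper
ancestor of `y`), then the source `s` is connected to `H_x` in `G \ {x,y}`: there is
a path in `G` avoiding both `x` and `y` from `s` to a vertex of `H_x`. -/
theorem stmt12 {V : Type*} [Fintype V] (G : SimpleGraph V) (hG : G.Connected)
    (T : RSTree G) (hch : V → V) (hhch : HchValid T hch)
    (uc vc : V → Set V → V) (hgood : GoodChoice G T uc vc)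
    (x : V) (hxs : x ≠ T.root)
    (hx : (G.induce (({x} : Set V)ᶜ)).Connected)
    (hxh : T.IsChild (hch x) x)
    (r0 : V)
    (hr1 : ∀ a : V,
      (a ∉ T.sub x ∧ ∃ b ∈ CompOfVert G (T.Vx x) (hch x), G.Adj a b) → T.Anc r0 a)
    (hr2 : ∀ w : V,
      (∀ a : V, (a ∉ T.sub x ∧ ∃ b ∈ CompOfVert G (T.Vx x) (hch x), G.Adj a b) →
        T.Anc w a) → T.Anc w r0)
    (y : V)
    (hy1 : T.Anc y (uc x (CompOfVert G (T.Vx x) (hch x))))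
    (hy2 : T.Anc r0 y) (hy3 : y ≠ r0) :
    ∃ b ∈ CompOfVert G (T.Vx x) (hch x),
      ReachableWithin G (({x, y} : Set V)ᶜ) T.root b :=
  stmt12_general G T hch uc vc hgood x hxs hx hxh r0 hr2 y hy1 hy2 hy3
end

section
/- Suppose the rooted tree T has depth at most D. For each mutual pair x,y (i.e., a heavy pair with r(x) = y and r(y) = x), fix one ordering of the pair and define the path Π_{x,y} := π(x, v_{H_x}) followed by the edge (v_{H_x}, u_{H_x}) followed by π(u_{H_x}, y). Then every vertex of G lies on at most 2(D+1) of the paths in {Π_{x,y} : x,y a mutual pair}. (Indeed, each vertex belongs to at most one mutual pair; a vertex a can lie on the first segment of Π_{x,y} only if x is an ancestor of a, and on the last segment only if y is an ancestor of a.) -/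
/-- The vertex set of the channel `Π_{x,y} = π(x, v_{H_x}) ∘ (v_{H_x}, u_{H_x}) ∘
π(u_{H_x}, y)` associated to a mutual pair `x, y` (for the chosen ordering): the
vertices of the tree path from `x` down to `v_{H_x}` together with the vertices of the
tree path from `y` down to `u_{H_x}`. -/
def MutPath {V : Type*} {G : SimpleGraph V} (T : RSTree G) (hch : V → V)
    (uc vc : V → Set V → V) (x y : V) : Set V :=
  {w | T.Anc x w ∧ T.Anc w (vc x (CompOfVert G (T.Vx x) (hch x)))} ∪
  {w | T.Anc y w ∧ T.Anc w (uc x (CompOfVert G (T.Vx x) (hch x)))}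

namespace RSTree

variable {V : Type*} {G : SimpleGraph V}

theorem setOf_anc_subset_image_iterate (T : RSTree G) {D : ℕ} {v : V}
    (hv : ∃ n ≤ D, T.parent^[n] v = T.root) :
    {u | T.Anc u v} ⊆ (fun n => T.parent^[n] v) '' Set.Iic D := by
  obtain ⟨m, hmD, hm⟩ := hv
  rintro u ⟨n, rfl⟩
  rcases le_or_gt n D with hnD | hDn
  · exact ⟨n, hnD, rfl⟩
  · refine ⟨m, hmD, ?_⟩
    change T.parent^[m] v = T.parent^[n] v
    rw [hm, ← Nat.sub_add_cancel (hmD.trans hDn.le), Function.iterate_add_apply, hm,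
      Function.iterate_fixed T.parent_root]

theorem finite_setOf_anc (T : RSTree G) {D : ℕ} {v : V}
    (hv : ∃ n ≤ D, T.parent^[n] v = T.root) : {u | T.Anc u v}.Finite :=
  ((Set.finite_Iic D).image _).subset (T.setOf_anc_subset_image_iterate hv)

theorem ncard_setOf_anc_le (T : RSTree G) {D : ℕ} {v : V}
    (hv : ∃ n ≤ D, T.parent^[n] v = T.root) : {u | T.Anc u v}.ncard ≤ D + 1 :=
  calc {u | T.Anc u v}.ncard
      ≤ ((fun n => T.parent^[n] v) '' Set.Iic D).ncard :=
        Set.ncard_le_ncard (T.setOf_anc_subset_image_iterate hv) ((Set.finite_Iic D).image _)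
    _ ≤ (Set.Iic D).ncard := Set.ncard_image_le (Set.finite_Iic D)
    _ = D + 1 := by simp

end RSTree

theorem Set.ncard_le_two_mul_of_mutual {α : Type*} {S : Set (α × α)} {A : Set α}
    (hA : A.Finite) (f : α → α)
    (hS : ∀ p ∈ S, f p.1 = p.2 ∧ f p.2 = p.1 ∧ (p.1 ∈ A ∨ p.2 ∈ A)) :
    S.ncard ≤ 2 * A.ncard := by
  have hcover : S ⊆ (fun x => (x, f x)) '' A ∪ (fun y => (f y, y)) '' A := by
    rintro ⟨x, y⟩ hp
    obtain ⟨hxy, hyx, hx | hy⟩ := hS _ hp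
    · exact Or.inl ⟨x, hx, congrArg (Prod.mk x) hxy⟩
    · exact Or.inr ⟨y, hy, congrArg (Prod.mk · y) hyx⟩
  calc S.ncard
      ≤ ((fun x => (x, f x)) '' A ∪ (fun y => (f y, y)) '' A).ncard :=
        Set.ncard_le_ncard hcover ((hA.image _).union (hA.image _))
    _ ≤ ((fun x => (x, f x)) '' A).ncard + ((fun y => (f y, y)) '' A).ncard :=
        Set.ncard_union_le _ _
    _ ≤ A.ncard + A.ncard := add_le_add (Set.ncard_image_le hA) (Set.ncard_image_le hA)
    _ = 2 * A.ncard := (two_mul _).symm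

theorem stmt15_general {V : Type*} (G : SimpleGraph V)
    (T : RSTree G) (hch : V → V)
    (uc vc : V → Set V → V)
    (D : ℕ) (hdepth : ∀ v : V, ∃ n ≤ D, T.parent^[n] v = T.root)
    (r : V → V)
    (a : V) :
    {p : V × V | HeavyPair T hch uc vc p.1 p.2 ∧ r p.1 = p.2 ∧ r p.2 = p.1 ∧
        a ∈ MutPath T hch uc vc p.1 p.2}.ncard ≤ 2 * (D + 1) := by
  calc _ ≤ 2 * {u | T.Anc u a}.ncard :=
        Set.ncard_le_two_mul_of_mutual (T.finite_setOf_anc (hdepth a)) r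
          (by rintro p ⟨-, hxy, hyx, hmem⟩; exact ⟨hxy, hyx, hmem.imp And.left And.left⟩)
    _ ≤ 2 * (D + 1) := Nat.mul_le_mul_left 2 (T.ncard_setOf_anc_le (hdepth a))

/-- Suppose the rooted tree `T` has depth at most `D`, and let
`r : V → V` be the lowest-common-ancestor function `x ↦ r(x) = LCA(R(x))` (as
specified by the hypothesis `hr`). A heavy pair `x, y` is mutual if `r x = y` and
`r y = x`; to each (ordering of a) mutual pair associate the channel `Π_{x,y}`.
Then every vertex of `G` lies on at most `2(D+1)` of the channels: each vertex
belongs to at most one mutual pair, a vertex `a` can lie on the first segment of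
`Π_{x,y}` only if `x` is an ancestor of `a`, and on the last segment only if `y`
is an ancestor of `a`. -/
theorem stmt15 {V : Type*} [Fintype V] (G : SimpleGraph V) (hG : G.Connected)
    (T : RSTree G) (hch : V → V) (hhch : HchValid T hch)
    (uc vc : V → Set V → V) (hgood : GoodChoice G T uc vc)
    (D : ℕ) (hdepth : ∀ v : V, ∃ n ≤ D, T.parent^[n] v = T.root)
    (r : V → V)
    (hr : ∀ x : V, x ≠ T.root → (G.induce (({x} : Set V)ᶜ)).Connected →
      T.IsChild (hch x) x →
      (∀ a : V, (a ∉ T.sub x ∧ ∃ b ∈ CompOfVert G (T.Vx x) (hch x), G.Adj a b) →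
        T.Anc (r x) a) ∧
      (∀ w : V, (∀ a : V,
          (a ∉ T.sub x ∧ ∃ b ∈ CompOfVert G (T.Vx x) (hch x), G.Adj a b) →
          T.Anc w a) → T.Anc w (r x)))
    (a : V) :
    {p : V × V | HeavyPair T hch uc vc p.1 p.2 ∧ r p.1 = p.2 ∧ r p.2 = p.1 ∧
        a ∈ MutPath T hch uc vc p.1 p.2}.ncard ≤ 2 * (D + 1) :=
  stmt15_general G T hch uc vc D hdepth r a
end
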